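/- (Positivity of the splitting scheme.) Suppose for all cells i: h^n_i E^n_i + g^n_{K,i} ≥ 0, E^n_i ≥ 0, E^{n+1}_i ≥ 0, h^n_i ∈ (0,1], h^{n+1}_i ∈ [0,1], ν, ε, Δt, Δx > 0. Define g^{n+1/2}_{K,i} = g^n_{K,i} h^{n+1}_i/h^n_i and then g^{n+1}_{K,i} by the semi-implicit upwind scheme for a fixed velocity v. If Δt |v| / Δx · h^{n+1}_i (g^{n+1/2}_{K,i} + E^n_i) ≤ g^{n+1/2}_{K,i} + h^{n+1}_i E^n_i for all i, then h^{n+1}_i E^{n+1}_i + g^{n+1}_{K,i} ≥ 0 for all i, and consequently E^{n+1}_i + g^{n+1}_{K,i} ≥ 0 for all i. -/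

import Mathlib

/-!
Multiplying the scheme by `Δt` and collecting terms gives
`(1 + Δt ν / ε) g^{n+1}_i + h^{n+1}_i E^{n+1}_i
  = (g^{n+1/2}_i + h^{n+1}_i E^n_i) - (Δt / Δx) h^{n+1}_i D_i(g^{n+1/2} + E^n)`,
where `D_i` is the upwind flux difference. For a nonnegative profile `w`, `D_i w ≤ |v| w_i`,
since the neighbour contributions `v⁻ w_{i+1}` and `-v⁺ w_{i-1}` are nonpositive, so the CFL
condition makes the right-hand side nonnegative. The profile `g^{n+1/2} + E^n` is nonnegative
because `g^{n+1/2} + h^{n+1} E^n = (h^{n+1} / h^n) (h^n E^n + g^n)` and `h^{n+1} ≤ 1`.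
Finally the relaxation factor `1 + Δt ν / ε ≥ 1` can only help, as `h^{n+1} E^{n+1} ≥ 0`.
-/

/-- `φ_{i+1/2}(w) - φ_{i-1/2}(w)` for the first-order upwind flux with velocity `v`. -/
def upwindDiff (v : ℝ) (w : ℤ → ℝ) (i : ℤ) : ℝ :=
  (min v 0 * w (i + 1) + max v 0 * w i) - (min v 0 * w i + max v 0 * w (i - 1))

lemma upwindDiff_add (v : ℝ) (u w : ℤ → ℝ) (i : ℤ) :
    upwindDiff v (u + w) i = upwindDiff v u i + upwindDiff v w i := by
  simp only [upwindDiff, Pi.add_apply]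
  ring

lemma upwindDiff_eq (v : ℝ) (w : ℤ → ℝ) (i : ℤ) :
    upwindDiff v w i = |v| * w i + min v 0 * w (i + 1) - max v 0 * w (i - 1) := by
  have habs : |v| = max v 0 - min v 0 := by simpa using (max_sub_min_eq_abs' v 0).symm
  rw [habs, upwindDiff]
  ring

lemma upwindDiff_le_abs_mul (v : ℝ) {w : ℤ → ℝ} (hw : ∀ j, 0 ≤ w j) (i : ℤ) :
    upwindDiff v w i ≤ |v| * w i := by
  have hright : min v 0 * w (i + 1) ≤ 0 :=
    mul_nonpos_of_nonpos_of_nonneg (min_le_right v 0) (hw (i + 1))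
  have hleft : 0 ≤ max v 0 * w (i - 1) := mul_nonneg (le_max_right v 0) (hw (i - 1))
  rw [upwindDiff_eq]
  linarith

lemma add_nonneg_of_one_le_of_mul_add_nonneg {c g a : ℝ} (hc : 1 ≤ c) (ha : 0 ≤ a)
    (h : 0 ≤ c * g + a) : 0 ≤ g + a := by
  have hscaled : 0 ≤ c * (g + a) := by nlinarith [mul_nonneg (sub_nonneg.2 hc) ha]
  exact nonneg_of_mul_nonneg_right hscaled (by linarith)

lemma upwind_relaxation_step_eq {v ν ε Δt Δx : ℝ} (hε : ε ≠ 0) (hΔt : Δt ≠ 0) (hΔx : Δx ≠ 0)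
    {gHalf g1 E0 E1 h1 : ℤ → ℝ} {i : ℤ}
    (hscheme : (g1 i - gHalf i) / Δt + h1 i * upwindDiff v gHalf i / Δx
      = -(ν / ε) * g1 i - h1 i * ((E1 i - E0 i) / Δt + upwindDiff v E0 i / Δx)) :
    (1 + Δt * ν / ε) * g1 i + h1 i * E1 i
      = gHalf i + h1 i * E0 i - Δt / Δx * h1 i * upwindDiff v (gHalf + E0) i := by
  rw [upwindDiff_add]
  field_simp at hscheme ⊢
  linear_combination hscheme

lemma reprojection_add_mul_eq {g0 h0 h1 e : ℝ} (hh0 : h0 ≠ 0) :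
    g0 * h1 / h0 + h1 * e = h1 / h0 * (h0 * e + g0) := by
  field_simp
  ring

/-- positivity of the splitting scheme under the CFL condition. -/
theorem splitting_scheme_positivity
    (v ν ε Δt Δx : ℝ) (hν : 0 < ν) (hε : 0 < ε) (hΔt : 0 < Δt) (hΔx : 0 < Δx)
    (g0 gHalf g1 E0 E1 h0 h1 : ℤ → ℝ)
    (hE0 : ∀ i, 0 ≤ E0 i) (hE1 : ∀ i, 0 ≤ E1 i)
    (hh0 : ∀ i, 0 < h0 i ∧ h0 i ≤ 1) (hh1 : ∀ i, 0 ≤ h1 i ∧ h1 i ≤ 1)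
    -- induction hypothesis at time n
    (hpos : ∀ i, 0 ≤ h0 i * E0 i + g0 i)
    -- step 1: transition-function re-projection
    (hhalf : ∀ i, gHalf i = g0 i * h1 i / h0 i)
    -- step 2: semi-implicit upwind transport-relaxation scheme
    (hscheme : ∀ i : ℤ,
      (g1 i - gHalf i) / Δt
        + h1 i * ((min v 0 * gHalf (i + 1) + max v 0 * gHalf i)
            - (min v 0 * gHalf i + max v 0 * gHalf (i - 1))) / Δx
      = -(ν / ε) * g1 i
        - h1 i * ((E1 i - E0 i) / Δt
            + ((min v 0 * E0 (i + 1) + max v 0 * E0 i)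
              - (min v 0 * E0 i + max v 0 * E0 (i - 1))) / Δx))
    -- CFL condition
    (hCFL : ∀ i, Δt * |v| / Δx * (h1 i * (gHalf i + E0 i)) ≤ gHalf i + h1 i * E0 i) :
    (∀ i, 0 ≤ h1 i * E1 i + g1 i) ∧ (∀ i, 0 ≤ E1 i + g1 i) := by
  have hHalf_nonneg : ∀ j, 0 ≤ gHalf j + h1 j * E0 j := fun j => by
    rw [hhalf, reprojection_add_mul_eq (hh0 j).1.ne']
    exact mul_nonneg (div_nonneg (hh1 j).1 (hh0 j).1.le) (hpos j)
  have hprofile : ∀ j, 0 ≤ (gHalf + E0) j := fun j => by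
    rw [Pi.add_apply]
    nlinarith [hHalf_nonneg j, hE0 j, (hh1 j).2]
  have hrelax : ∀ i, 0 ≤ (1 + Δt * ν / ε) * g1 i + h1 i * E1 i := fun i => by
    have htransport : Δt / Δx * h1 i * upwindDiff v (gHalf + E0) i
        ≤ Δt * |v| / Δx * (h1 i * (gHalf i + E0 i)) := by
      calc Δt / Δx * h1 i * upwindDiff v (gHalf + E0) i
          ≤ Δt / Δx * h1 i * (|v| * (gHalf + E0) i) :=
            mul_le_mul_of_nonneg_left (upwindDiff_le_abs_mul v hprofile i)
              (mul_nonneg (by positivity) (hh1 i).1)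
        _ = Δt * |v| / Δx * (h1 i * (gHalf i + E0 i)) := by simp only [Pi.add_apply]; ring
    rw [upwind_relaxation_step_eq hε.ne' hΔt.ne' hΔx.ne' (hscheme i)]
    linarith [hCFL i]
  have hfactor : 1 ≤ 1 + Δt * ν / ε := le_add_of_nonneg_right (by positivity)
  have hfirst : ∀ i, 0 ≤ h1 i * E1 i + g1 i := fun i => by
    rw [add_comm]
    exact add_nonneg_of_one_le_of_mul_add_nonneg hfactor (mul_nonneg (hh1 i).1 (hE1 i)) (hrelax i)
  exact ⟨hfirst, fun i => by nlinarith [hfirst i, hE1 i, (hh1 i).2]⟩
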